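/- arXiv:math/0509565 — 4 statements merged into one kernel-verified Lean document; each statement's English description precedes it below -/
import Mathlib

section
/- Let r be an odd prime, p = 2r, and α a primitive 4p-th (i.e. 8r-th) root of unity. Define μ_i = (-1)^i α^{2i(i+2)}. Then for 0 ≤ i < j, if i ≢ j (mod 2) and (j-i)(i+j+2) ≢ 0 (mod r), the element μ_i - μ_j is a unit in Z[α]. -/
/-- For `r` an odd prime and `α` a primitive `8r`-th root of unity, with
`μ i = (-1)^i α^(2i(i+2))`: if `i < j`, `i ≢ j (mod 2)` and
`(j-i)(i+j+2) ≢ 0 (mod r)`, then `μ i - μ j` is a unit in `ℤ[α]`. -/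
theorem mu_sub_mu_isUnit_case_one
    (r : ℕ) (hr : r.Prime) (hodd : Odd r)
    (α : ℂ) (hα : IsPrimitiveRoot α (8 * r))
    (μ : ℕ → ℂ) (hμ : ∀ i, μ i = (-1) ^ i * α ^ (2 * i * (i + 2)))
    (i j : ℕ) (hij : i < j) (hpar : i % 2 ≠ j % 2)
    (hnd : ¬ (r ∣ (j - i) * (i + j + 2))) :
    ∃ x ∈ Subring.closure ({α} : Set ℂ), (μ i - μ j) * x = 1 := by
  have hr2 : r ≠ 2 := by rintro rfl; exact (by decide : ¬ Odd 2) hodd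
  have hrpos : 0 < r := hr.pos
  have hr1 : 1 < r := hr.one_lt
  -- basic exponents
  set a : ℕ := 2 * i * (i + 2) with ha
  set t : ℕ := (j - i) * (i + j + 2) + 2 * r with ht
  set s : ℕ := 2 * t with hs
  obtain ⟨d, rfl⟩ : ∃ d, j = i + (d + 1) := ⟨j - i - 1, by omega⟩
  have hji : i + (d + 1) - i = d + 1 := by omega
  -- parity facts
  have hdodd : (d + 1) % 2 = 1 := by omega
  have hije : (i + (i + (d + 1)) + 2) % 2 = 1 := by omega
  -- α ^ (4r) = -1
  have h4r : α ^ (4 * r) = -1 := by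
    have := (hα.pow (by positivity) (by ring : 8 * r = 4 * r * 2)).eq_neg_one_of_two_right
    exact this
  have h8r : α ^ (8 * r) = 1 := hα.pow_eq_one
  -- key factorization : μ i - μ j = (-1)^i * α^a * (1 - α^s)
  have hexp : a + s = 2 * (i + (d + 1)) * ((i + (d + 1)) + 2) + 4 * r := by
    simp only [ha, hs, ht, hji]; ring
  have hfact : μ i - μ (i + (d + 1)) = (-1) ^ i * α ^ a * (1 - α ^ s) := by
    rw [hμ, hμ]
    have hneg : ((-1 : ℂ)) ^ (i + (d + 1)) = -(-1 : ℂ) ^ i := by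
      rw [pow_add]
      have : ((-1 : ℂ)) ^ (d + 1) = -1 := Odd.neg_one_pow ⟨d / 2, by omega⟩
      rw [this]; ring
    have hαs : α ^ (a + s) = - α ^ (2 * (i + (d + 1)) * ((i + (d + 1)) + 2)) := by
      rw [hexp, pow_add, h4r]; ring
    rw [hneg]
    have : (-1 : ℂ) ^ i * α ^ a * (1 - α ^ s)
        = (-1 : ℂ) ^ i * α ^ a - (-1 : ℂ) ^ i * α ^ (a + s) := by
      rw [pow_add]; ring
    rw [this, hαs, ha]
    ring
  -- β := α ^ s is a primitive (4r)-th root of unity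
  have htodd : t % 2 = 1 := by
    rw [ht, hji]
    have : ((d + 1) * (i + (i + (d + 1)) + 2)) % 2 = 1 := by
      rw [Nat.mul_mod, hdodd, hije]
    omega
  have hrt : ¬ r ∣ t := by
    rw [ht]
    intro hdvd
    exact hnd ((Nat.dvd_add_iff_left (dvd_mul_left r 2)).mpr hdvd)
  have htcop : t.Coprime (4 * r) := by
    have h2 : t.Coprime 4 := by
      have : t.Coprime 2 :=
        Nat.coprime_comm.mp (Nat.prime_two.coprime_iff_not_dvd.mpr (by omega))
      simpa using this.pow_right 2
    have h3 : t.Coprime r := Nat.coprime_comm.mp (hr.coprime_iff_not_dvd.mpr hrt)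
    exact h2.mul_right h3
  have hβ : IsPrimitiveRoot (α ^ s) (4 * r) := by
    have h2 : IsPrimitiveRoot (α ^ 2) (4 * r) := hα.pow (by positivity) (by ring)
    have := h2.pow_of_coprime t htcop
    rwa [← pow_mul, show 2 * t = s from rfl] at this
  -- ¬ prime power 4r
  have hnpp : ∀ {p : ℕ}, p.Prime → ∀ k : ℕ, p ^ k ≠ 4 * r := by
    intro p hp k hpk
    have h2 : 2 ∣ p ^ k := hpk ▸ ⟨2 * r, by ring⟩
    have hrd : r ∣ p ^ k := hpk ▸ ⟨4, by ring⟩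
    have hp2 : 2 = p := (Nat.prime_dvd_prime_iff_eq Nat.prime_two hp).mp
      (Nat.Prime.dvd_of_dvd_pow Nat.prime_two h2)
    have hpr : r = p := (Nat.prime_dvd_prime_iff_eq hr hp).mp
      (hr.dvd_of_dvd_pow hrd)
    exact hr2 (hpr.trans hp2.symm)
  -- cyclotomic evaluation : ∏ over primitive roots of (1 - ξ) = 1
  have hprod : ∏ ξ ∈ primitiveRoots (4 * r) ℂ, (1 - ξ) = 1 := by
    have hc := Polynomial.cyclotomic_eq_prod_X_sub_primitiveRoots hβ
    have he : Polynomial.eval 1 (Polynomial.cyclotomic (4 * r) ℂ) = 1 :=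
      Polynomial.eval_one_cyclotomic_not_prime_pow hnpp
    rw [hc] at he
    simp only [Polynomial.eval_prod, Polynomial.eval_sub, Polynomial.eval_X,
      Polynomial.eval_C] at he
    exact he
  have hβmem : (α ^ s) ∈ primitiveRoots (4 * r) ℂ :=
    (mem_primitiveRoots (by positivity)).mpr hβ
  set x0 : ℂ := ∏ ξ ∈ (primitiveRoots (4 * r) ℂ).erase (α ^ s), (1 - ξ) with hx0
  have hunit : (1 - α ^ s) * x0 = 1 := by
    rw [hx0, Finset.mul_prod_erase _ _ hβmem]; exact hprod
  -- membership of x0 in the closure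
  have hαmem : α ∈ Subring.closure ({α} : Set ℂ) := Subring.subset_closure rfl
  have hx0mem : x0 ∈ Subring.closure ({α} : Set ℂ) := by
    refine Subring.prod_mem _ ?_
    intro ξ hξ
    have hξ' : ξ ∈ primitiveRoots (4 * r) ℂ := Finset.mem_of_mem_erase hξ
    have hξroot : ξ ^ (4 * r) = 1 :=
      ((mem_primitiveRoots (by positivity)).mp hξ').pow_eq_one
    have hξ8 : ξ ^ (8 * r) = 1 := by
      have : ξ ^ (8 * r) = (ξ ^ (4 * r)) ^ 2 := by rw [← pow_mul]; ring_nf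
      rw [this, hξroot, one_pow]
    have : NeZero (8 * r) := ⟨by positivity⟩
    obtain ⟨k, _, rfl⟩ := hα.eq_pow_of_pow_eq_one hξ8
    exact Subring.sub_mem _ (Subring.one_mem _) (Subring.pow_mem _ hαmem k)
  -- assemble
  refine ⟨(-1) ^ i * α ^ (a * (8 * r - 1)) * x0, ?_, ?_⟩
  · exact Subring.mul_mem _ (Subring.mul_mem _
      (Subring.pow_mem _ (Subring.neg_mem _ (Subring.one_mem _)) i)
      (Subring.pow_mem _ hαmem _)) hx0mem
  · rw [hfact]
    have hα8a : α ^ a * α ^ (a * (8 * r - 1)) = 1 := by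
      rw [← pow_add]
      have : a + a * (8 * r - 1) = (8 * r) * a := by
        obtain ⟨c, hc⟩ : ∃ c, 8 * r = c + 1 := ⟨8 * r - 1, by omega⟩
        rw [hc, Nat.add_sub_cancel]; ring
      rw [this, pow_mul, h8r, one_pow]
    have hneg1 : ((-1 : ℂ)) ^ i * (-1 : ℂ) ^ i = 1 := by
      rw [← mul_pow]; norm_num
    calc (-1 : ℂ) ^ i * α ^ a * (1 - α ^ s) * ((-1) ^ i * α ^ (a * (8 * r - 1)) * x0)
        = ((-1 : ℂ) ^ i * (-1) ^ i) * (α ^ a * α ^ (a * (8 * r - 1)))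
          * ((1 - α ^ s) * x0) := by ring
      _ = 1 := by rw [hneg1, hα8a, hunit]; ring
end

section
/- Let r be an odd prime, p = 2r, α a primitive 8r-th root of unity, and μ_i = (-1)^i α^{2i(i+2)}. If 0 ≤ i < j, i ≢ j (mod 2), and (j-i)(i+j+2) ≡ 0 (mod r), then μ_i - μ_j equals √2 times a unit of Z[α], where √2 = α^r + α^{-r} up to a unit (i.e., μ_i - μ_j generates the same ideal of Z[α] as 1 + i, with i = α^{2r}). -/
/-- For `r` an odd prime and `α` a primitive `8r`-th root of unity, with
`μ i = (-1)^i α^(2i(i+2))`: if `i < j`, `i ≢ j (mod 2)` and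
`(j-i)(i+j+2) ≡ 0 (mod r)`, then `μ i - μ j` is associated in `ℤ[α]`
to `1 + i = 1 + α^(2r)` (which plays the role of `√2` up to units). -/
theorem mu_sub_mu_assoc_sqrt_two
    (r : ℕ) (hr : r.Prime) (hodd : Odd r)
    (α : ℂ) (hα : IsPrimitiveRoot α (8 * r))
    (μ : ℕ → ℂ) (hμ : ∀ i, μ i = (-1) ^ i * α ^ (2 * i * (i + 2)))
    (i j : ℕ) (hij : i < j) (hpar : i % 2 ≠ j % 2)
    (hd : r ∣ (j - i) * (i + j + 2)) :
    ∃ u ∈ Subring.closure ({α} : Set ℂ),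
      (∃ v ∈ Subring.closure ({α} : Set ℂ), u * v = 1) ∧
      μ i - μ j = u * (1 + α ^ (2 * r)) := by
  have hr1 : 0 < r := hr.pos
  have hαS : α ∈ Subring.closure ({α} : Set ℂ) := Subring.subset_closure rfl
  have h8 : α ^ (8 * r) = 1 := hα.pow_eq_one
  have h4 : α ^ (4 * r) = -1 := by
    have hsq : α ^ (4 * r) * α ^ (4 * r) = 1 := by
      rw [← pow_add, show 4 * r + 4 * r = 8 * r by ring]; exact h8
    rcases mul_self_eq_one_iff.mp hsq with h | h
    · exact absurd h (hα.pow_ne_one_of_pos_of_lt (by omega) (by omega))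
    · exact h
  have hz2 : α ^ (2 * r) * α ^ (2 * r) = -1 := by
    rw [← pow_add, show 2 * r + 2 * r = 4 * r by ring]; exact h4
  obtain ⟨k, hk⟩ := hd
  obtain ⟨m, rfl⟩ : ∃ m, j = i + m := ⟨j - i, by omega⟩
  rw [show i + m - i = m from by omega] at hk
  have hrodd : r % 2 = 1 := Nat.odd_iff.mp hodd
  have hkodd : Odd k := by
    have hdodd : Odd (m * (i + (i + m) + 2)) :=
      Odd.mul (Nat.odd_iff.mpr (by omega)) (Nat.odd_iff.mpr (by omega))
    rw [hk, Nat.odd_mul] at hdodd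
    exact hdodd.2
  have hkodd' : k % 2 = 1 := Nat.odd_iff.mp hkodd
  have hexp : 2 * (i + m) * (i + m + 2) = 2 * i * (i + 2) + 2 * (r * k) := by
    rw [← hk]; ring
  obtain ⟨q, c, hcs, hkc⟩ : ∃ q c, (c = 1 ∨ c = 3) ∧ k = 4 * q + c :=
    ⟨k / 4, k % 4, by omega, by omega⟩
  have hpowk : α ^ (2 * (r * k)) = α ^ (2 * r * c) := by
    rw [hkc, show 2 * (r * (4 * q + c)) = 8 * r * q + 2 * r * c by ring,
      pow_add, pow_mul, h8, one_pow, one_mul]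
  have hsign : ((-1 : ℂ)) ^ (i + m) = -(-1 : ℂ) ^ i := by
    rw [pow_add, (Nat.odd_iff.mpr (by omega) : Odd m).neg_one_pow, mul_neg_one]
  have hdiff : μ i - μ (i + m) =
      (-1 : ℂ) ^ i * α ^ (2 * i * (i + 2)) * (1 + α ^ (2 * r * c)) := by
    rw [hμ i, hμ (i + m), hsign, hexp, pow_add, hpowk]; ring
  have hsgn2 : ((-1 : ℂ)) ^ i * (-1 : ℂ) ^ i = 1 := by
    rw [← pow_add]; exact Even.neg_one_pow ⟨i, rfl⟩
  rcases hcs with rfl | rfl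
  · -- k ≡ 1 (mod 4): α^(2rc) = α^(2r)
    refine ⟨(-1 : ℂ) ^ i * α ^ (2 * i * (i + 2)),
      Subring.mul_mem _ (pow_mem (neg_mem (one_mem _)) i) (pow_mem hαS _),
      ⟨(-1 : ℂ) ^ i * α ^ (8 * r * (2 * i * (i + 2)) - 2 * i * (i + 2)),
        Subring.mul_mem _ (pow_mem (neg_mem (one_mem _)) i) (pow_mem hαS _), ?_⟩, ?_⟩
    · have hle : 2 * i * (i + 2) ≤ 8 * r * (2 * i * (i + 2)) :=
        Nat.le_mul_of_pos_left _ (by omega)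
      have hαα : α ^ (2 * i * (i + 2)) *
          α ^ (8 * r * (2 * i * (i + 2)) - 2 * i * (i + 2)) = 1 := by
        rw [← pow_add, show 2 * i * (i + 2) +
          (8 * r * (2 * i * (i + 2)) - 2 * i * (i + 2)) = 8 * r * (2 * i * (i + 2))
          from by omega, pow_mul, h8, one_pow]
      rw [mul_mul_mul_comm, hsgn2, hαα, one_mul]
    · rw [hdiff, mul_one]
  · -- k ≡ 3 (mod 4): α^(6r) = -α^(2r), and 1 - i = -i(1 + i)
    have h6 : α ^ (2 * r * 3) = -α ^ (2 * r) := by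
      rw [show 2 * r * 3 = 4 * r + 2 * r by ring, pow_add, h4]; ring
    refine ⟨-((-1 : ℂ) ^ i) * α ^ (2 * i * (i + 2) + 2 * r),
      Subring.mul_mem _ (neg_mem (pow_mem (neg_mem (one_mem _)) i)) (pow_mem hαS _),
      ⟨-((-1 : ℂ) ^ i) * α ^ (8 * r * (2 * i * (i + 2) + 2 * r) - (2 * i * (i + 2) + 2 * r)),
        Subring.mul_mem _ (neg_mem (pow_mem (neg_mem (one_mem _)) i)) (pow_mem hαS _), ?_⟩, ?_⟩
    · have hle : 2 * i * (i + 2) + 2 * r ≤ 8 * r * (2 * i * (i + 2) + 2 * r) :=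
        Nat.le_mul_of_pos_left _ (by omega)
      have hαα : α ^ (2 * i * (i + 2) + 2 * r) *
          α ^ (8 * r * (2 * i * (i + 2) + 2 * r) - (2 * i * (i + 2) + 2 * r)) = 1 := by
        rw [← pow_add, show (2 * i * (i + 2) + 2 * r) +
          (8 * r * (2 * i * (i + 2) + 2 * r) - (2 * i * (i + 2) + 2 * r)) =
          8 * r * (2 * i * (i + 2) + 2 * r) from by omega, pow_mul, h8, one_pow]
      rw [mul_mul_mul_comm, neg_mul_neg, hsgn2, hαα, one_mul]
    · rw [hdiff, h6, pow_add]
      linear_combination ((-1 : ℂ)) ^ i * α ^ (2 * i * (i + 2)) * hz2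
end

section
/- Let r be an odd prime, A = ζ_{2r} a primitive 2r-th root of unity, and q = -A. Define μ_i = q^{i²+2i}. Then for 0 ≤ i < j ≤ (r-3)/2, the elements μ_i² - μ_j², μ_i - μ_j, and 1 - A² generate the same ideal of Z[A] (i.e., μ_i² - μ_j² ∼ μ_i - μ_j ∼ 1 - A² up to units). -/
/-- For `r` an odd prime, `A` a primitive `2r`-th root of unity, `q = -A` and
`μ i = q^(i²+2i)`: for `0 ≤ i < j ≤ (r-3)/2`, the elements `μ i ² - μ j ²`,
`μ i - μ j` and `1 - A²` are pairwise associated in `ℤ[A]`. -/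
theorem twist_coeff_assoc
    (r : ℕ) (hr : r.Prime) (hodd : Odd r)
    (A : ℂ) (hA : IsPrimitiveRoot A (2 * r))
    (μ : ℕ → ℂ) (hμ : ∀ i, μ i = (-A) ^ (i ^ 2 + 2 * i))
    (i j : ℕ) (hij : i < j) (hj : j ≤ (r - 3) / 2) :
    (∃ u ∈ Subring.closure ({A} : Set ℂ),
      (∃ v ∈ Subring.closure ({A} : Set ℂ), u * v = 1) ∧
      μ i ^ 2 - μ j ^ 2 = u * (μ i - μ j)) ∧
    (∃ u ∈ Subring.closure ({A} : Set ℂ),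
      (∃ v ∈ Subring.closure ({A} : Set ℂ), u * v = 1) ∧
      μ i - μ j = u * (1 - A ^ 2)) := by
  set q : ℂ := -A with hqdef
  set R : Subring ℂ := Subring.closure ({A} : Set ℂ) with hR
  have hr2 : r % 2 = 1 := Nat.odd_iff.mp hodd
  have hr3 : 3 ≤ r := by
    have := hr.two_le; omega
  have hAmem : A ∈ R := Subring.subset_closure rfl
  have hqmem : q ∈ R := neg_mem hAmem
  -- A^r = -1
  have hA2r : A ^ (2 * r) = 1 := hA.pow_eq_one
  have hAr : A ^ r = -1 := by
    have h2 : (A ^ r - 1) * (A ^ r + 1) = 0 := by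
      have : A ^ r * A ^ r = 1 := by
        rw [← pow_add, show r + r = 2 * r by ring]; exact hA2r
      linear_combination this
    have h3 : A ^ r ≠ 1 := hA.pow_ne_one_of_pos_of_lt (by omega) (by omega)
    rcases mul_eq_zero.mp h2 with h | h
    · exact absurd (sub_eq_zero.mp h) h3
    · linear_combination h
  have hqr : q ^ r = 1 := by
    rw [hqdef, Odd.neg_pow hodd, hAr, neg_neg]
  have hqmod : ∀ n : ℕ, q ^ n = q ^ (n % r) := by
    intro n
    conv_lhs => rw [← Nat.div_add_mod n r]
    rw [pow_add, pow_mul, hqr, one_pow, one_mul]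
  have hqne : ∀ a : ℕ, ¬ r ∣ a → q ^ a ≠ 1 := by
    intro a ha h
    have h1 : 0 < a % r := Nat.pos_of_ne_zero fun h0 => ha (Nat.dvd_of_mod_eq_zero h0)
    have h2 : a % r < r := Nat.mod_lt _ (by omega)
    have ht : q ^ (a % r) = 1 := by rw [← hqmod]; exact h
    have hA2 : A ^ (2 * (a % r)) = 1 := by
      rw [pow_mul, show A ^ 2 = q ^ 2 by rw [hqdef, neg_sq], ← pow_mul,
        mul_comm, pow_mul, ht, one_pow]
    exact hA.pow_ne_one_of_pos_of_lt (by omega) (by omega) hA2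
  haveI : NeZero r := ⟨by omega⟩
  haveI : Fact r.Prime := ⟨hr⟩
  -- key divisibility lemma
  have key : ∀ a b : ℕ, ¬ r ∣ a → ∃ S ∈ R, (1 - q ^ a) * S = 1 - q ^ b := by
    intro a b ha
    have haz : (a : ZMod r) ≠ 0 := by
      rwa [Ne, ZMod.natCast_eq_zero_iff]
    set c : ℕ := ((a : ZMod r)⁻¹ * (b : ZMod r)).val with hc
    have hac : (a * c) % r = b % r := by
      have : ((a * c : ℕ) : ZMod r) = (b : ZMod r) := by
        push_cast
        rw [hc, ZMod.natCast_val, ZMod.cast_id]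
        field_simp
      exact (ZMod.natCast_eq_natCast_iff' _ _ _).mp this
    refine ⟨∑ t ∈ Finset.range c, (q ^ a) ^ t,
      sum_mem fun t _ => pow_mem (pow_mem hqmem a) t, ?_⟩
    have hgeom := geom_sum_mul (q ^ a) c
    have hxc : (q ^ a) ^ c = q ^ b := by
      rw [← pow_mul, hqmod (a * c), hac, ← hqmod b]
    calc (1 - q ^ a) * ∑ t ∈ Finset.range c, (q ^ a) ^ t
        = -((∑ t ∈ Finset.range c, (q ^ a) ^ t) * (q ^ a - 1)) := by ring
      _ = -((q ^ a) ^ c - 1) := by rw [hgeom]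
      _ = 1 - q ^ b := by rw [hxc]; ring
  have key2 : ∀ a b : ℕ, ¬ r ∣ a → ¬ r ∣ b →
      ∃ S T : ℂ, S ∈ R ∧ T ∈ R ∧ (1 - q ^ a) * S = 1 - q ^ b ∧ S * T = 1 := by
    intro a b ha hb
    obtain ⟨S, hS, hSe⟩ := key a b ha
    obtain ⟨T, hT, hTe⟩ := key b a hb
    have hne : (1 - q ^ a) ≠ 0 := sub_ne_zero.mpr (Ne.symm (hqne a ha))
    refine ⟨S, T, hS, hT, hSe, mul_left_cancel₀ hne ?_⟩
    rw [mul_one, ← mul_assoc, hSe, hTe]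
  -- inverse of powers of q
  have hqinv : ∀ e : ℕ, q ^ e * q ^ (e * (r - 1)) = 1 := by
    intro e
    obtain ⟨r', rfl⟩ : ∃ r', r = r' + 1 := ⟨r - 1, by omega⟩
    rw [← pow_add, hqmod]
    have h1 : (e + e * (r' + 1 - 1)) % (r' + 1) = 0 := by
      have : e + e * (r' + 1 - 1) = e * (r' + 1) := by simp; ring
      rw [this, Nat.mul_mod_left]
    rw [h1, pow_zero]
  -- arithmetic setup
  obtain ⟨d, rfl⟩ : ∃ d, j = i + d + 1 := ⟨j - i - 1, by omega⟩
  set e : ℕ := i ^ 2 + 2 * i with he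
  set m : ℕ := (d + 1) * (2 * i + d + 3) with hm
  have h1 : e + m = (i + d + 1) ^ 2 + 2 * (i + d + 1) := by rw [he, hm]; ring
  have hbound : 2 * i + d + 3 < r := by omega
  have hdm : ¬ r ∣ m := by
    rw [hm]
    intro h
    rcases (Nat.Prime.dvd_mul hr).mp h with h | h
    · exact absurd (Nat.le_of_dvd (by omega) h) (by omega)
    · exact absurd (Nat.le_of_dvd (by omega) h) (by omega)
  have hd2m : ¬ r ∣ 2 * m := by
    intro h
    rcases (Nat.Prime.dvd_mul hr).mp h with h | h
    · exact absurd (Nat.le_of_dvd (by omega) h) (by omega)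
    · exact hdm h
  have hd2 : ¬ r ∣ 2 := fun h => absurd (Nat.le_of_dvd (by omega) h) (by omega)
  have hμi : μ i = q ^ e := hμ i
  have hμj : μ (i + d + 1) = q ^ e * q ^ m := by
    rw [hμ (i + d + 1), ← pow_add, h1]
  have hq2A : q ^ 2 = A ^ 2 := by rw [hqdef, neg_sq]
  clear_value q e m
  constructor
  · -- first associate
    obtain ⟨S, T, hS, hT, hSe, hST⟩ := key2 m (2 * m) hdm hd2m
    refine ⟨q ^ e * S, mul_mem (pow_mem hqmem e) hS,
      ⟨q ^ (e * (r - 1)) * T, mul_mem (pow_mem hqmem _) hT, ?_⟩, ?_⟩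
    · calc q ^ e * S * (q ^ (e * (r - 1)) * T)
          = (q ^ e * q ^ (e * (r - 1))) * (S * T) := by ring
        _ = 1 := by rw [hqinv, hST, mul_one]
    · rw [hμi, hμj]
      have h2m : q ^ (2 * m) = q ^ m * q ^ m := by rw [two_mul, pow_add]
      rw [h2m] at hSe
      linear_combination (-(q ^ e) ^ 2) * hSe
  · -- second associate
    obtain ⟨S, T, hS, hT, hSe, hST⟩ := key2 2 m hd2 hdm
    refine ⟨q ^ e * S, mul_mem (pow_mem hqmem e) hS,
      ⟨q ^ (e * (r - 1)) * T, mul_mem (pow_mem hqmem _) hT, ?_⟩, ?_⟩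
    · calc q ^ e * S * (q ^ (e * (r - 1)) * T)
          = (q ^ e * q ^ (e * (r - 1))) * (S * T) := by ring
        _ = 1 := by rw [hqinv, hST, mul_one]
    · rw [hμi, hμj, ← hq2A]
      linear_combination (-(q ^ e)) * hSe
end

section
/- Let r be an odd prime and μ_i = (-1)^i ζ_{8r}^{2i(i+2)} for 0 ≤ i ≤ r-2. The Vandermonde determinant det[μ_i^j]_{0 ≤ i,j ≤ r-2} = ±∏_{i<j}(μ_i - μ_j) is associated in Z[ζ_{8r}] to (1+i)^{(r-1)/2} · (1 + ζ_{8r}^4)^{(r-1)(r-3)/4}, where i = ζ_{8r}^{2r}. -/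
/-!
As `α ^ (4 r) = -1`, `μ i = α ^ (4 r i + 2 i (i + 2))`, so for `i < j` we get
`μ j - μ i = μ i (α ^ (2 d s) - 1)` with `d = j - i ∈ (0, r)` and `s = i + j + 2 + 2 r ∈ (2 r, 4 r)`
of the same parity.
* If `s = 3 r`, then `d` is odd and `α ^ (2 d s) - 1 = ι ^ (3 d) - 1` for the primitive fourth root
  `ι = α ^ (2 r)`; it is associated to `ι ^ 3 - 1 = -(1 + ι)`.
* If `d` and `s` are even, `α ^ (2 d s)` is a power of the primitive `r`-th root `α ^ 8` with
  exponent prime to `r`, so `α ^ (2 d s) - 1` is associated to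
  `(α ^ 8) ^ ((r + 1) / 2) - 1 = -(1 + α ^ 4)`.
* Otherwise `η = α ^ (2 d s)` is a primitive `4 r`-th root of unity, and `η - 1` divides
  `Φ_{4r}(1) = 1` since `4 r` is not a prime power.

Counting the pairs of the first two kinds gives the exponents. The argument works in any integral
domain containing a primitive `8 r`-th root of unity; the theorem is the case of `ℤ[α]`.
-/

open Finset Polynomial

namespace Nat

theorem card_filter_Ioo_even_add (i m : ℕ) :
    #{j ∈ Ioo i m | Even (i + j)} = (m - 1 - i) / 2 := by
  rw [← Nat.Ioc_filter_dvd_card_eq_div]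
  refine card_nbij' (· - i) (· + i) ?_ ?_ ?_ ?_ <;>
    simp only [coe_filter, mem_Ioo, mem_Ioc, Set.MapsTo, Set.LeftInvOn, Set.mem_ofPred_eq,
      Nat.even_iff, Nat.dvd_iff_mod_eq_zero] <;> omega

theorem sum_range_two_mul_div_two (t : ℕ) : ∑ k ∈ range (2 * t), k / 2 = t * (t - 1) := by
  induction t with
  | zero => simp
  | succ t ih =>
    rw [show 2 * (t + 1) = 2 * t + 1 + 1 by ring, sum_range_succ, sum_range_succ, ih]
    rcases t with _ | t
    · simp
    · rw [show (2 * (t + 1)) / 2 = t + 1 by omega, show (2 * (t + 1) + 1) / 2 = t + 1 by omega]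
      simp only [Nat.add_sub_cancel]
      ring

theorem sum_card_filter_Ioo_even_add (t : ℕ) :
    ∑ i ∈ range (2 * t), #{j ∈ Ioo i (2 * t) | Even (i + j)} = t * (t - 1) := by
  simp only [card_filter_Ioo_even_add]
  rw [← sum_range_reflect, ← sum_range_two_mul_div_two]
  exact sum_congr rfl fun i hi => by rw [mem_range] at hi; congr 1; omega

theorem sum_card_filter_Ioo_add_eq (n : ℕ) :
    ∑ i ∈ range n, #{j ∈ Ioo i n | i + j + 1 = n} = n / 2 := by
  have hcard : ∀ i, #{j ∈ Ioo i n | i + j + 1 = n} = if 2 * i + 1 < n then 1 else 0 := by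
    intro i
    split_ifs with h
    · rw [Finset.card_eq_one]
      exact ⟨n - 1 - i, by ext j; simp only [mem_filter, mem_Ioo, mem_singleton]; omega⟩
    · rw [Finset.card_eq_zero, filter_eq_empty_iff]
      intro j hj
      rw [mem_Ioo] at hj
      omega
  simp only [hcard, sum_boole]
  have hfilter : {i ∈ range n | 2 * i + 1 < n} = range (n / 2) := by
    ext i
    simp only [mem_filter, mem_range]
    omega
  simp [hfilter]

theorem prime_pow_ne_four_mul {r : ℕ} (hodd : Odd r) (hr : 1 < r) {p : ℕ} (hp : p.Prime)
    (k : ℕ) : p ^ k ≠ 4 * r := by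
  intro h
  have hp2 : p = 2 :=
    ((Nat.prime_dvd_prime_iff_eq Nat.prime_two hp).mp
      (Nat.prime_two.dvd_of_dvd_pow (h ▸ dvd_mul_of_dvd_left (by norm_num) r))).symm
  have hr1 : r = 1 :=
    (hodd.coprime_two_right.pow_right k).eq_one_of_dvd (hp2 ▸ h ▸ dvd_mul_left r 4)
  omega

end Nat

theorem Fin.sum_sum_Ioi_eq_sum_range_sum_Ioo {M : Type*} [AddCommMonoid M] {n : ℕ}
    (f : ℕ → ℕ → M) :
    ∑ i : Fin n, ∑ j ∈ Ioi i, f i j = ∑ i ∈ range n, ∑ j ∈ Ioo i n, f i j := by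
  rw [← Fin.sum_univ_eq_sum_range (fun i => ∑ j ∈ Ioo i n, f i j)]
  refine sum_congr rfl fun i _ => ?_
  rw [← Fin.map_valEmbedding_Ioi, sum_map]
  rfl

namespace IsPrimitiveRoot

variable {A : Type*} [CommRing A] [IsDomain A]

theorem isUnit_sub_one_of_ne_prime_pow {η : A} {n : ℕ} (hη : IsPrimitiveRoot η n) (hn : 0 < n)
    (h : ∀ {p : ℕ}, p.Prime → ∀ k : ℕ, p ^ k ≠ n) : IsUnit (η - 1) := by
  have := sub_dvd_eval_sub η 1 (cyclotomic n A)
  rw [eval_one_cyclotomic_not_prime_pow h, (hη.isRoot_cyclotomic hn).eq_zero, zero_sub,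
    dvd_neg] at this
  exact isUnit_of_dvd_one this

theorem associated_pow_sub_one_one_add_of_four {ι : A} (hι : IsPrimitiveRoot ι 4) {k : ℕ}
    (hk : Odd k) : Associated (ι ^ k - 1) (1 + ι) := by
  have hcop : ∀ {m : ℕ}, Odd m → m.Coprime 4 := fun hm => hm.coprime_two_right.pow_right 2
  have hι3 : ι ^ 3 - 1 = -(1 + ι) := by
    have : ι ^ 2 = -1 := (hι.pow (by norm_num) (by norm_num : 4 = 2 * 2)).eq_neg_one_of_two_right
    linear_combination ι * this
  simpa [hι3] using
    (hι.associated_pow_sub_one_pow_of_coprime (hcop (by decide : Odd 3)) (hcop hk)).neg_right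

variable {a : A} {r : ℕ}

theorem pow_four_mul_eq_neg_one (ha : IsPrimitiveRoot a (8 * r)) (hr : 0 < r) :
    a ^ (4 * r) = -1 :=
  (ha.pow (by positivity) (by ring)).eq_neg_one_of_two_right

theorem associated_pow_two_mul_mul_sub_one_one_add (ha : IsPrimitiveRoot a (8 * r)) (hr : 0 < r)
    {m : ℕ} (hm : Odd m) : Associated (a ^ (2 * r * m) - 1) (1 + a ^ (2 * r)) := by
  rw [pow_mul]
  exact (ha.pow (by positivity) (by ring)).associated_pow_sub_one_one_add_of_four hm

theorem associated_pow_eight_mul_sub_one_one_add (ha : IsPrimitiveRoot a (8 * r))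
    (hr : r.Prime) (hodd : Odd r) {m : ℕ} (hm : ¬ r ∣ m) :
    Associated (a ^ (8 * m) - 1) (1 + a ^ 4) := by
  have hr2 := hr.two_le
  have hr1 := Nat.odd_iff.mp hodd
  have ha8 : IsPrimitiveRoot (a ^ 8) r := ha.pow (by omega) (by ring)
  have hq : (a ^ 8) ^ ((r + 1) / 2) - 1 = -(1 + a ^ 4) := by
    rw [← pow_mul, show 8 * ((r + 1) / 2) = 4 * r + 4 by omega, pow_add,
      ha.pow_four_mul_eq_neg_one hr.pos]
    ring
  have hqr : ((r + 1) / 2).Coprime r := ((hr.coprime_iff_not_dvd).mpr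
    (Nat.not_dvd_of_pos_of_lt (by omega) (by omega))).symm
  rw [pow_mul, ← neg_neg (1 + a ^ 4), ← hq]
  exact (ha8.associated_pow_sub_one_pow_of_coprime hqr
    ((hr.coprime_iff_not_dvd).mpr hm).symm).neg_right

theorem isUnit_pow_two_mul_sub_one (ha : IsPrimitiveRoot a (8 * r)) (hr : r.Prime) (hodd : Odd r)
    {m : ℕ} (hm : Odd m) (hrm : ¬ r ∣ m) : IsUnit (a ^ (2 * m) - 1) := by
  have ha2 : IsPrimitiveRoot (a ^ 2) (4 * r) := ha.pow (by have := hr.pos; omega) (by ring)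
  have hcop : m.Coprime (4 * r) :=
    (hm.coprime_two_right.pow_right 2).mul_right ((hr.coprime_iff_not_dvd).mpr hrm).symm
  rw [pow_mul]
  exact (ha2.pow_of_coprime m hcop).isUnit_sub_one_of_ne_prime_pow (by have := hr.pos; omega)
    (fun hp k => Nat.prime_pow_ne_four_mul hodd hr.one_lt hp k)

theorem associated_pow_two_mul_mul_sub_one (ha : IsPrimitiveRoot a (8 * r)) (hr : r.Prime)
    (hodd : Odd r) {d s : ℕ} (hd : 0 < d) (hdr : d < r) (hs : 2 * r < s) (hsr : s < 4 * r)
    (hds : Even (d + s)) :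
    Associated (a ^ (2 * d * s) - 1)
      ((1 + a ^ (2 * r)) ^ (if s = 3 * r then 1 else 0) *
        (1 + a ^ 4) ^ (if Even d then 1 else 0)) := by
  have hr1 := Nat.odd_iff.mp hodd
  have hrd : ¬ r ∣ d := Nat.not_dvd_of_pos_of_lt hd hdr
  rw [Nat.even_add, Nat.even_iff, Nat.even_iff] at hds
  by_cases hs3 : s = 3 * r
  · have hdodd : ¬ Even d := by rw [Nat.even_iff]; omega
    rw [if_pos hs3, if_neg hdodd, pow_one, pow_zero, mul_one, hs3,
      show 2 * d * (3 * r) = 2 * r * (3 * d) by ring]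
    exact ha.associated_pow_two_mul_mul_sub_one_one_add hr.pos
      (Nat.odd_mul.mpr ⟨by decide, Nat.not_even_iff_odd.mp hdodd⟩)
  by_cases hde : Even d
  · rw [if_neg hs3, if_pos hde, pow_zero, one_mul, pow_one]
    obtain ⟨s', rfl⟩ : Even s := by rw [Nat.even_iff] at hde ⊢; omega
    obtain ⟨d', rfl⟩ := hde
    have hrs' : ¬ r ∣ s' := Nat.not_dvd_of_lt_of_lt_mul_succ (k := 1) (by omega) (by omega)
    have hrd' : ¬ r ∣ d' := Nat.not_dvd_of_pos_of_lt (by omega) (by omega)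
    rw [show 2 * (d' + d') * (s' + s') = 8 * (d' * s') by ring]
    exact ha.associated_pow_eight_mul_sub_one_one_add hr hodd
      (fun h => (hr.dvd_mul.mp h).elim hrd' hrs')
  · rw [if_neg hs3, if_neg hde, pow_zero, pow_zero, mul_one, associated_one_iff_isUnit, mul_assoc]
    have hrs : ¬ r ∣ s := by
      rcases lt_or_gt_of_ne hs3 with h | h
      · exact Nat.not_dvd_of_lt_of_lt_mul_succ (k := 2) (by omega) (by omega)
      · exact Nat.not_dvd_of_lt_of_lt_mul_succ (k := 3) (by omega) (by omega)
    rw [Nat.not_even_iff_odd] at hde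
    exact ha.isUnit_pow_two_mul_sub_one hr hodd
      (hde.mul (Nat.odd_iff.mpr (by rw [Nat.odd_iff] at hde; omega)))
      (fun h => (hr.dvd_mul.mp h).elim hrd hrs)

theorem sub_eq_mul_pow_sub_one (ha : IsPrimitiveRoot a (8 * r)) (hr : 0 < r) {i j : ℕ}
    (hij : i ≤ j) :
    (-1) ^ j * a ^ (2 * j * (j + 2)) - (-1) ^ i * a ^ (2 * i * (i + 2)) =
      (-1) ^ i * a ^ (2 * i * (i + 2)) * (a ^ (2 * (j - i) * (i + j + 2 + 2 * r)) - 1) := by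
  obtain ⟨k, rfl⟩ := Nat.exists_eq_add_of_le hij
  rw [← ha.pow_four_mul_eq_neg_one hr, Nat.add_sub_cancel_left]
  ring

theorem associated_sub (ha : IsPrimitiveRoot a (8 * r)) (hr : r.Prime) (hodd : Odd r) {i j : ℕ}
    (hij : i < j) (hj : j < r - 1) :
    Associated ((-1) ^ j * a ^ (2 * j * (j + 2)) - (-1) ^ i * a ^ (2 * i * (i + 2)))
      ((1 + a ^ (2 * r)) ^ (if i + j + 1 = r - 1 then 1 else 0) *
        (1 + a ^ 4) ^ (if Even (i + j) then 1 else 0)) := by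
  have hunit : IsUnit ((-1 : A) ^ i * a ^ (2 * i * (i + 2))) :=
    ((isUnit_neg_one).pow i).mul ((ha.isUnit (by have := hr.pos; omega)).pow _)
  rw [ha.sub_eq_mul_pow_sub_one hr.pos hij.le, associated_isUnit_mul_left_iff hunit]
  have hds : Even (j - i + (i + j + 2 + 2 * r)) := ⟨j + 1 + r, by omega⟩
  have h := ha.associated_pow_two_mul_mul_sub_one hr hodd (by omega) (by omega) (by omega)
    (by omega) hds
  have hs : i + j + 2 + 2 * r = 3 * r ↔ i + j + 1 = r - 1 := by omega
  have hd : Even (j - i) ↔ Even (i + j) := by simp only [Nat.even_iff]; omega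
  simpa only [hs, hd] using h

theorem associated_det_vandermonde (ha : IsPrimitiveRoot a (8 * r)) (hr : r.Prime)
    (hodd : Odd r) :
    Associated
      (Matrix.vandermonde fun i : Fin (r - 1) => (-1) ^ (i : ℕ) * a ^ (2 * i * (i + 2 : ℕ))).det
      ((1 + a ^ (2 * r)) ^ ((r - 1) / 2) * (1 + a ^ 4) ^ ((r - 1) * (r - 3) / 4)) := by
  obtain ⟨t, ht⟩ := hodd
  have hsum : ∑ i : Fin (r - 1), ∑ j ∈ Ioi i, (if (i : ℕ) + j + 1 = r - 1 then 1 else 0) =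
      (r - 1) / 2 := by
    rw [Fin.sum_sum_Ioi_eq_sum_range_sum_Ioo fun i j => if i + j + 1 = r - 1 then 1 else 0]
    simp only [sum_boole, Nat.cast_id, Nat.sum_card_filter_Ioo_add_eq]
  have hparity : ∑ i : Fin (r - 1), ∑ j ∈ Ioi i, (if Even ((i : ℕ) + j) then 1 else 0) =
      (r - 1) * (r - 3) / 4 := by
    rw [Fin.sum_sum_Ioi_eq_sum_range_sum_Ioo fun i j => if Even (i + j) then 1 else 0]
    simp only [sum_boole, Nat.cast_id, show r - 1 = 2 * t by omega,
      Nat.sum_card_filter_Ioo_even_add]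
    rw [show r - 3 = 2 * (t - 1) by omega, show 2 * t * (2 * (t - 1)) = 4 * (t * (t - 1)) by ring,
      Nat.mul_div_cancel_left _ (by norm_num)]
  rw [Matrix.det_vandermonde]
  refine (Associated.prod univ _ _ fun (i : Fin (r - 1)) _ => Associated.prod (Ioi i) _ _
    fun j hj => ha.associated_sub hr ⟨t, ht⟩ (Fin.lt_def.mp (mem_Ioi.mp hj)) j.isLt).trans ?_
  simp only [prod_mul_distrib, prod_pow_eq_pow_sum, hsum, hparity]
  rfl

end IsPrimitiveRoot

theorem Subring.exists_mem_mul_eq_of_associated {R : Type*} [CommRing R] {S : Subring R}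
    {x y : S} (h : Associated x y) : ∃ u ∈ S, (∃ v ∈ S, u * v = 1) ∧ (y : R) = u * x := by
  obtain ⟨u, rfl⟩ := h
  exact ⟨u, (u : S).prop, ⟨(↑u⁻¹ : S), (↑u⁻¹ : S).prop, by exact_mod_cast u.mul_inv⟩,
    by push_cast; ring⟩

/-- For `r` an odd prime, `α` a primitive `8r`-th root of unity, and
`μ i = (-1)^i α^(2i(i+2))`, the Vandermonde determinant `det [μ i ^ j]` for
`0 ≤ i,j ≤ r-2` is associated in `ℤ[α]` to
`(1 + α^(2r))^((r-1)/2) · (1 + α^4)^((r-1)(r-3)/4)`, where `α^(2r) = i`. -/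
theorem vandermonde_det_assoc
    (r : ℕ) (hr : r.Prime) (hodd : Odd r)
    (α : ℂ) (hα : IsPrimitiveRoot α (8 * r))
    (μ : ℕ → ℂ) (hμ : ∀ i, μ i = (-1) ^ i * α ^ (2 * i * (i + 2))) :
    ∃ u ∈ Subring.closure ({α} : Set ℂ),
      (∃ v ∈ Subring.closure ({α} : Set ℂ), u * v = 1) ∧
      Matrix.det (fun i j : Fin (r - 1) => μ (i : ℕ) ^ (j : ℕ))
        = u * ((1 + α ^ (2 * r)) ^ ((r - 1) / 2) *
               (1 + α ^ 4) ^ ((r - 1) * (r - 3) / 4)) := by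
  set S := Subring.closure ({α} : Set ℂ)
  set a : S := ⟨α, Subring.subset_closure rfl⟩
  have ha : IsPrimitiveRoot a (8 * r) :=
    hα.of_map_of_injective (f := S.subtype) Subtype.val_injective
  have hdet : Matrix.det (fun i j : Fin (r - 1) => μ (i : ℕ) ^ (j : ℕ)) =
      S.subtype (Matrix.vandermonde fun i : Fin (r - 1) =>
        (-1) ^ (i : ℕ) * a ^ (2 * i * (i + 2 : ℕ))).det := by
    rw [RingHom.map_det]
    congr
    ext i j
    simp [Matrix.vandermonde, hμ, a]
  simpa [hdet] using
    Subring.exists_mem_mul_eq_of_associated (ha.associated_det_vandermonde hr hodd).symm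
end
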